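/- arXiv:2308.10733 — 4 statements merged into one kernel-verified Lean document; each statement's English description precedes it below -/
import Mathlib

section
/- Let μ be a locally finite positive Borel measure, let F be a collection of dyadic intervals, and suppose F satisfies the Carleson condition: for every F₀ ∈ F, the sum over F' ∈ F with F' ⊆ F₀ of μ(F') is at most C₀·μ(F₀). Then there exist positive constants δ and C_δ depending only on C₀ such that for every F₀ ∈ F and every n ≥ 0, the sum of μ(F') over all n-th generation descendants F' of F₀ in the tree F is at most C_δ·2^{−δn}·μ(F₀). -/
open MeasureTheory Set
open scoped ENNReal NNReal

/-- The dyadic interval `[k·2ⁿ, (k+1)·2ⁿ)`. -/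
def dyadicInterval (n k : ℤ) : Set ℝ :=
  Set.Ico ((k : ℝ) * 2 ^ n) (((k : ℝ) + 1) * 2 ^ n)

/-- The `n`-th generation descendants of `q₀` in the tree `F` of dyadic intervals:
those members of `F` contained in the interval of `q₀` whose chain of strict
`F`-ancestors up to `q₀` has length exactly `n`. -/
def dyadicGen (F : Set (ℤ × ℤ)) (q₀ : ℤ × ℤ) (n : ℕ) : Set (ℤ × ℤ) :=
  {q | q ∈ F ∧ dyadicInterval q.1 q.2 ⊆ dyadicInterval q₀.1 q₀.2 ∧
    Set.ncard {q' | q' ∈ F ∧ dyadicInterval q.1 q.2 ⊂ dyadicInterval q'.1 q'.2 ∧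
      dyadicInterval q'.1 q'.2 ⊆ dyadicInterval q₀.1 q₀.2} = n}

/-!
Let `β m` be the mass of the `m`-th generation below `F₀`. Since the sets above any member of the
family form a chain, every descendant of generation `m + j` lies in generation `j` below some
interval of generation `m`; applying the Carleson condition to each interval of generation `m` gives
`∑ⱼ β (m + j) ≤ C β m`. The tails `T m = ∑_{j ≥ m} β j = β m + T (m + 1)` then satisfy
`(C + 1) T (m + 1) ≤ C T m`, so they decay geometrically with ratio `C / (C + 1)`, and `β n ≤ T n`.
-/

section IndexedTree

variable {ι X : Type*}

def treeAncestors (I : ι → Set X) (F : Set ι) (q₀ q : ι) : Set ι :=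
  {q' | q' ∈ F ∧ I q ⊂ I q' ∧ I q' ⊆ I q₀}

-- `dyadicGen F q₀` is `treeGen (fun q ↦ dyadicInterval q.1 q.2) F q₀` by definition.
def treeGen (I : ι → Set X) (F : Set ι) (q₀ : ι) (n : ℕ) : Set ι :=
  {q | q ∈ F ∧ I q ⊆ I q₀ ∧ (treeAncestors I F q₀ q).ncard = n}

def IsTreeFamily (I : ι → Set X) : Prop :=
  ∀ ⦃a b c⦄, I c ⊆ I a → I c ⊆ I b → I a ⊆ I b ∨ I b ⊆ I a

variable {I : ι → Set X} {F : Set ι} {q₀ q p p' : ι}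

lemma self_mem_treeGen_zero (hq : q ∈ F) : q ∈ treeGen I F q 0 := by
  have hempty : treeAncestors I F q q = ∅ :=
    eq_empty_of_forall_notMem fun _ h => ssubset_irrefl _ (h.2.1.trans_subset h.2.2)
  exact ⟨hq, subset_rfl, by rw [hempty, ncard_empty]⟩

lemma treeAncestors_ssubset_of_ssubset (hp' : p' ∈ F) (hp'₀ : I p' ⊆ I q₀) (h : I p ⊂ I p') :
    treeAncestors I F q₀ p' ⊂ treeAncestors I F q₀ p := by
  have hsub : treeAncestors I F q₀ p' ⊆ treeAncestors I F q₀ p :=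
    fun _ hb => ⟨hb.1, h.trans hb.2.1, hb.2.2⟩
  exact (ssubset_iff_of_subset hsub).2 ⟨p', ⟨hp', h, hp'₀⟩, fun hp'' => ssubset_irrefl _ hp''.2.1⟩

lemma treeAncestors_ssubset_of_mem (hp : p ∈ treeAncestors I F q₀ q) :
    treeAncestors I F q₀ p ⊂ treeAncestors I F q₀ q :=
  treeAncestors_ssubset_of_ssubset hp.1 hp.2.2 hp.2.1

lemma treeAncestors_sdiff_treeAncestors (hT : IsTreeFamily I)
    (hp : p ∈ treeAncestors I F q₀ q) :
    treeAncestors I F q₀ q \ treeAncestors I F q₀ p = treeAncestors I F p q := by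
  ext b
  simp only [treeAncestors, mem_sdiff, mem_ofPred_eq]
  constructor
  · rintro ⟨⟨hbF, hqb, hb₀⟩, hnot⟩
    refine ⟨hbF, hqb, by_contra fun hbp => hnot ⟨hbF, ?_, hb₀⟩⟩
    exact ((hT hqb.subset hp.2.1.subset).resolve_left hbp).ssubset_of_not_superset hbp
  · rintro ⟨hbF, hqb, hbp⟩
    exact ⟨⟨hbF, hqb, hbp.trans hp.2.2⟩, fun h => h.2.1.not_superset hbp⟩

lemma injOn_ncard_treeAncestors (hI : I.Injective) (hT : IsTreeFamily I)
    (hfin : (treeAncestors I F q₀ q).Finite) :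
    InjOn (fun p => (treeAncestors I F q₀ p).ncard) (treeAncestors I F q₀ q) := by
  have hlt : ∀ ⦃p p'⦄, p ∈ treeAncestors I F q₀ q → p' ∈ treeAncestors I F q₀ q → I p ⊂ I p' →
      (treeAncestors I F q₀ p').ncard < (treeAncestors I F q₀ p).ncard := fun p p' hp hp' h =>
    ncard_lt_ncard (treeAncestors_ssubset_of_ssubset hp'.1 hp'.2.2 h)
      (hfin.subset (treeAncestors_ssubset_of_mem hp).subset)
  intro p hp p' hp' h
  rcases hT hp.2.1.subset hp'.2.1.subset with hpp' | hp'p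
  · exact hpp'.eq_or_ssubset.elim (fun h' => hI h') fun h' => absurd h (hlt hp hp' h').ne'
  · exact hp'p.eq_or_ssubset.elim (fun h' => (hI h').symm) fun h' => absurd h (hlt hp' hp h').ne

lemma exists_mem_treeGen_of_mem_treeGen_add (hI : I.Injective) (hT : IsTreeFamily I) {m j : ℕ}
    (hq : q ∈ treeGen I F q₀ (m + j)) : ∃ p ∈ treeGen I F q₀ m, q ∈ treeGen I F p j := by
  obtain rfl | hj := j.eq_zero_or_pos
  · exact ⟨q, hq, self_mem_treeGen_zero hq.1⟩
  set S := treeAncestors I F q₀ q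
  have hS : S.ncard = m + j := hq.2.2
  have hfin : S.Finite := finite_of_ncard_pos (by omega)
  -- `p ↦ #(ancestors of p)` maps the chain `S` injectively into `[0, m + j)`, hence onto it.
  obtain ⟨p, hp, hpm⟩ : ∃ p ∈ S, (treeAncestors I F q₀ p).ncard = m := by
    obtain ⟨p, hp, hpm⟩ := surj_on_of_inj_on_of_ncard_le (t := ↑(Finset.range (m + j)))
      (fun p _ => (treeAncestors I F q₀ p).ncard)
      (fun p hp => by
        simpa [← hS] using ncard_lt_ncard (treeAncestors_ssubset_of_mem hp) hfin)
      (fun p p' hp hp' => injOn_ncard_treeAncestors hI hT hfin hp hp')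
      (by rw [ncard_coe_finset, Finset.card_range, hS]) (Finset.finite_toSet _) m
      (by simp only [Finset.coe_range, mem_Iio]; omega)
    exact ⟨p, hp, hpm.symm⟩
  refine ⟨p, ⟨hp.1, hp.2.2, hpm⟩, hq.1, hp.2.1.subset, ?_⟩
  rw [← treeAncestors_sdiff_treeAncestors hT hp,
    ncard_sdiff (treeAncestors_ssubset_of_mem hp).subset
      (hfin.subset (treeAncestors_ssubset_of_mem hp).subset), hS, hpm]
  omega

lemma tsum_treeGen_add_le (hI : I.Injective) (hT : IsTreeFamily I)
    (w : ι → ℝ≥0∞) (q₀ : ι) (m j : ℕ) :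
    ∑' q : treeGen I F q₀ (m + j), w q ≤ ∑' p : treeGen I F q₀ m, ∑' q : treeGen I F p j, w q :=
  calc ∑' q : treeGen I F q₀ (m + j), w q
      ≤ ∑' q : ⋃ p ∈ treeGen I F q₀ m, treeGen I F p j, w q :=
        ENNReal.tsum_mono_subtype w fun _ hq => by
          obtain ⟨p, hp, hqp⟩ := exists_mem_treeGen_of_mem_treeGen_add hI hT hq
          exact mem_biUnion hp hqp
    _ ≤ _ := ENNReal.tsum_biUnion_le_tsum w _ _

lemma tsum_tsum_treeGen_le (w : ι → ℝ≥0∞) (p : ι) :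
    ∑' j, ∑' q : treeGen I F p j, w q ≤ ∑' q : {q // q ∈ F ∧ I q ⊆ I p}, w q := by
  rw [← ENNReal.tsum_biUnion fun i _ j _ hij =>
    disjoint_left.2 fun _ hi hj => hij (hi.2.2.symm.trans hj.2.2)]
  exact ENNReal.tsum_mono_subtype w (iUnion_subset fun _ _ hq => ⟨hq.1, hq.2.1⟩)

lemma tsum_tsum_treeGen_add_le (hI : I.Injective) (hT : IsTreeFamily I)
    {w : ι → ℝ≥0∞} {C : ℝ≥0∞}
    (hC : ∀ p ∈ F, ∑' q : {q // q ∈ F ∧ I q ⊆ I p}, w q ≤ C * w p) (q₀ : ι) (m : ℕ) :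
    ∑' j, ∑' q : treeGen I F q₀ (m + j), w q ≤ C * ∑' p : treeGen I F q₀ m, w p :=
  calc ∑' j, ∑' q : treeGen I F q₀ (m + j), w q
      ≤ ∑' j, ∑' p : treeGen I F q₀ m, ∑' q : treeGen I F p j, w q :=
        ENNReal.tsum_le_tsum fun j => tsum_treeGen_add_le hI hT w q₀ m j
    _ = ∑' p : treeGen I F q₀ m, ∑' j, ∑' q : treeGen I F p j, w q := ENNReal.tsum_comm
    _ ≤ ∑' p : treeGen I F q₀ m, C * w p :=
        ENNReal.tsum_le_tsum fun p => (tsum_tsum_treeGen_le w p).trans (hC p p.2.1)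
    _ = C * ∑' p : treeGen I F q₀ m, w p := ENNReal.tsum_mul_left

end IndexedTree

theorem ENNReal.tsum_nat_add_le_pow_mul_tsum {b : ℕ → ℝ≥0∞} {K : ℝ≥0}
    (h : ∀ m, ∑' j, b (m + j) ≤ K * b m) (n : ℕ) :
    ∑' j, b (n + j) ≤ ((K : ℝ≥0∞) / (K + 1)) ^ n * ∑' j, b j := by
  have htail : ∀ m, ∑' j, b (m + j) = b m + ∑' j, b (m + 1 + j) := fun m => by
    rw [tsum_eq_zero_add' ENNReal.summable]
    simp only [add_zero, add_assoc, add_comm 1]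
  have hstep : ∀ m, ∑' j, b (m + 1 + j) ≤ (K : ℝ≥0∞) / (K + 1) * ∑' j, b (m + j) := fun m => by
    rw [← ENNReal.mul_div_right_comm, ENNReal.le_div_iff_mul_le (by simp) (by simp)]
    calc (∑' j, b (m + 1 + j)) * (K + 1)
        = K * ∑' j, b (m + 1 + j) + ∑' j, b (m + 1 + j) := by ring
      _ ≤ K * ∑' j, b (m + 1 + j) + K * b m := by
          gcongr
          exact (htail m ▸ le_add_self).trans (h m)
      _ = K * ∑' j, b (m + j) := by rw [htail m]; ring
  induction n with
  | zero => simp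
  | succ n ih =>
    calc ∑' j, b (n + 1 + j) ≤ (K : ℝ≥0∞) / (K + 1) * ∑' j, b (n + j) := hstep n
      _ ≤ (K : ℝ≥0∞) / (K + 1) * (((K : ℝ≥0∞) / (K + 1)) ^ n * ∑' j, b j) := by gcongr
      _ = ((K : ℝ≥0∞) / (K + 1)) ^ (n + 1) * ∑' j, b j := by rw [pow_succ', mul_assoc]

lemma dyadicInterval_nonempty (n k : ℤ) : (dyadicInterval n k).Nonempty :=
  nonempty_Ico.2 (mul_lt_mul_of_pos_right (lt_add_one _) (zpow_pos two_pos n))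

lemma mem_dyadicInterval_iff {n k : ℤ} {x : ℝ} : x ∈ dyadicInterval n k ↔ ⌊x / 2 ^ n⌋ = k := by
  have h := zpow_pos (two_pos : (0 : ℝ) < 2) n
  rw [Int.floor_eq_iff, le_div_iff₀ h, div_lt_iff₀ h]
  rfl

lemma dyadicInterval_injective : Function.Injective fun q : ℤ × ℤ => dyadicInterval q.1 q.2 := by
  rintro ⟨n, k⟩ ⟨m, l⟩ h
  obtain ⟨hk, hk₁⟩ := (Ico_eq_Ico_iff (Or.inl (nonempty_Ico.1 (dyadicInterval_nonempty n k)))).1 h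
  obtain rfl : n = m := zpow_right_injective₀ two_pos (by norm_num : (2 : ℝ) ≠ 1) (by linarith)
  obtain rfl : k = l := by exact_mod_cast mul_right_cancel₀ (zpow_pos two_pos n).ne' hk
  rfl

lemma dyadicInterval_subset_of_le {n m k l : ℤ} {x : ℝ} (hnm : n ≤ m)
    (hx : x ∈ dyadicInterval n k) (hx' : x ∈ dyadicInterval m l) :
    dyadicInterval n k ⊆ dyadicInterval m l := by
  obtain ⟨d, hd⟩ := Int.eq_ofNat_of_zero_le (sub_nonneg.2 hnm)
  obtain rfl : m = n + d := by omega
  have hfloor : ∀ y : ℝ, ⌊y / 2 ^ (n + d : ℤ)⌋ = ⌊y / 2 ^ n⌋ / (2 ^ d : ℕ) := fun y => by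
    rw [← Int.floor_div_natCast, zpow_add₀ two_ne_zero, div_div]
    push_cast
    rfl
  intro y hy
  rw [mem_dyadicInterval_iff] at hx hx' hy ⊢
  rw [hfloor] at hx' ⊢
  rw [hy, ← hx, hx']

lemma isTreeFamily_dyadicInterval : IsTreeFamily fun q : ℤ × ℤ => dyadicInterval q.1 q.2 := by
  intro a b c ha hb
  obtain ⟨x, hx⟩ := dyadicInterval_nonempty c.1 c.2
  rcases le_total a.1 b.1 with h | h
  · exact Or.inl (dyadicInterval_subset_of_le h (ha hx) (hb hx))
  · exact Or.inr (dyadicInterval_subset_of_le h (hb hx) (ha hx))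

lemma tsum_dyadicGen_le_pow_mul {μ : Measure ℝ} {F : Set (ℤ × ℤ)} {K : ℝ≥0}
    (hC : ∀ q₀ ∈ F,
      ∑' q : {q : ℤ × ℤ // q ∈ F ∧ dyadicInterval q.1 q.2 ⊆ dyadicInterval q₀.1 q₀.2},
        μ (dyadicInterval q.1.1 q.1.2) ≤ K * μ (dyadicInterval q₀.1 q₀.2))
    {q₀ : ℤ × ℤ} (hq₀ : q₀ ∈ F) (n : ℕ) :
    ∑' q : dyadicGen F q₀ n, μ (dyadicInterval q.1.1 q.1.2) ≤
      ((K : ℝ≥0∞) / (K + 1)) ^ n * (K * μ (dyadicInterval q₀.1 q₀.2)) := by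
  set β : ℕ → ℝ≥0∞ := fun m => ∑' q : dyadicGen F q₀ m, μ (dyadicInterval q.1.1 q.1.2)
  have hgen : ∀ m, ∑' j, β (m + j) ≤ K * β m :=
    tsum_tsum_treeGen_add_le dyadicInterval_injective isTreeFamily_dyadicInterval hC q₀
  have hdescendants : ∑' j, β j ≤ K * μ (dyadicInterval q₀.1 q₀.2) :=
    (tsum_tsum_treeGen_le (I := fun q : ℤ × ℤ => dyadicInterval q.1 q.2) (F := F)
      (fun q => μ (dyadicInterval q.1 q.2)) q₀).trans (hC q₀ hq₀)
  calc β n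
      ≤ ∑' j, β (n + j) := ENNReal.le_tsum (f := fun j => β (n + j)) 0
    _ ≤ ((K : ℝ≥0∞) / (K + 1)) ^ n * ∑' j, β j := ENNReal.tsum_nat_add_le_pow_mul_tsum hgen n
    _ ≤ ((K : ℝ≥0∞) / (K + 1)) ^ n * (K * μ (dyadicInterval q₀.1 q₀.2)) :=
        mul_le_mul_right hdescendants _

/-- If a collection `F` of dyadic intervals satisfies a `μ`-Carleson condition with
constant `C₀`, then there are positive constants `δ, C_δ` depending only on `C₀`
such that the `n`-th generation descendants of any `F₀ ∈ F` carry total `μ`-measure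
at most `C_δ · 2^{−δn} · μ(F₀)`. -/
theorem stmt2 (C₀ : ℝ≥0) :
    ∃ δ : ℝ, 0 < δ ∧ ∃ Cδ : ℝ, 0 < Cδ ∧
      ∀ (μ : Measure ℝ), IsLocallyFiniteMeasure μ →
        ∀ F : Set (ℤ × ℤ),
          (∀ q₀ ∈ F,
            ∑' q : {q : ℤ × ℤ // q ∈ F ∧
                dyadicInterval q.1 q.2 ⊆ dyadicInterval q₀.1 q₀.2},
              μ (dyadicInterval q.1.1 q.1.2)
              ≤ (C₀ : ℝ≥0∞) * μ (dyadicInterval q₀.1 q₀.2)) →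
          ∀ q₀ ∈ F, ∀ n : ℕ,
            ∑' q : dyadicGen F q₀ n, μ (dyadicInterval q.1.1 q.1.2)
              ≤ ENNReal.ofReal (Cδ * 2 ^ (-δ * (n : ℝ))) *
                  μ (dyadicInterval q₀.1 q₀.2) := by
  set K : ℝ≥0 := C₀ + 1
  set r : ℝ≥0 := K / (K + 1)
  have hr₀ : 0 < (r : ℝ) := by positivity
  have hr₁ : (r : ℝ) < 1 := by
    rw [NNReal.coe_lt_one, div_lt_one (by positivity)]
    exact lt_add_one K
  refine ⟨-Real.logb 2 r, neg_pos.2 (Real.logb_neg one_lt_two hr₀ hr₁), K, by positivity, ?_⟩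
  intro μ _ F hC q₀ hq₀ n
  have hcoef :
      ENNReal.ofReal (K * 2 ^ (-(-Real.logb 2 r) * n)) = ((K : ℝ≥0∞) / (K + 1)) ^ n * K := by
    rw [neg_neg, Real.rpow_mul_natCast zero_le_two, Real.rpow_logb two_pos (by norm_num) hr₀,
      ← NNReal.coe_pow, ← NNReal.coe_mul, ENNReal.ofReal_coe_nnreal, ENNReal.coe_mul,
      ENNReal.coe_pow, ENNReal.coe_div (by positivity), mul_comm]
    rfl
  rw [hcoef, mul_assoc]
  exact tsum_dyadicGen_le_pow_mul (fun p hp => (hC p hp).trans (by gcongr; exact le_self_add)) hq₀ n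
end

section
/- Let 1 < p < 2 and ω a positive measure, and let g, b ≥ 0 be measurable functions. Set Λ^p = ∫(g²+b²)^{p/2} dω − ∫ g^p dω. Then with η = 1/2 one has ∫ b^p dω ≤ max{ η^{−p−3} Λ^p , (1−η)^{−1} (Λ^p)^{p/2} (∫ g^p dω)^{1−p/2} }. -/
/-!
Write `u = g²`, `v = b²`, `q = p / 2`, `c = 2 ^ q - 1` and `φ = (u + v) ^ q - u ^ q ≥ 0`, so that
`Λ^p = ∫ φ`. Concavity of `t ↦ t ^ q` gives `c v ^ q ≤ φ` where `u ≤ v`, and `c v u ^ (q - 1) ≤ φ`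
where `v ≤ u`. On the second region `v ^ q = (v u ^ (q - 1)) ^ q (u ^ q) ^ (1 - q)`, so Hölder with
exponents `1 / q` and `1 / (1 - q)` bounds its contribution by `(∫ φ / c) ^ q (∫ u ^ q) ^ (1 - q)`.
If the two regions carry the fractions `t` and `1 - t` of `∫ φ`, Bernoulli's inequality
`t ^ q ≤ 1 - q (1 - t)` together with `c ≥ 1 / 4` and `c ^ q ≥ 1 / 2` absorbs both contributions
into the maximum.
-/

open MeasureTheory

theorem ConcaveOn.add_le_add_of_le_of_le {s : Set ℝ} {f : ℝ → ℝ} (hf : ConcaveOn ℝ s f)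
    {a b x y : ℝ} (ha : a ∈ s) (hb : b ∈ s) (hax : a ≤ x) (hxb : x ≤ b) (hsum : x + y = a + b) :
    f a + f b ≤ f x + f y := by
  rcases hax.eq_or_lt with rfl | hax
  · obtain rfl : y = b := by linarith
    exact le_rfl
  have hab : 0 < b - a := by linarith
  set t := (b - x) / (b - a)
  have ht0 : 0 ≤ t := div_nonneg (by linarith) hab.le
  have ht1 : t ≤ 1 := (div_le_one hab).2 (by linarith)
  have hx : t • a + (1 - t) • b = x := by
    simp only [smul_eq_mul, t]; field_simp; ring
  have hy : (1 - t) • a + t • b = y := by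
    simp only [smul_eq_mul] at hx ⊢; linear_combination -hsum - hx
  have h1 := hf.2 ha hb ht0 (sub_nonneg.2 ht1) (by ring)
  have h2 := hf.2 ha hb (sub_nonneg.2 ht1) ht0 (by ring)
  rw [hx] at h1
  rw [hy] at h2
  simp only [smul_eq_mul] at h1 h2
  linarith

namespace Real

variable {q : ℝ}

theorem two_rpow_sub_one_mul_le_add_rpow_sub_rpow (hq0 : 0 ≤ q) (hq1 : q ≤ 1) {u v : ℝ}
    (hv : 0 ≤ v) (hvu : v ≤ u) : (2 ^ q - 1) * (v * u ^ (q - 1)) ≤ (u + v) ^ q - u ^ q := by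
  rcases (hv.trans hvu).eq_or_lt with rfl | hu
  · obtain rfl : v = 0 := le_antisymm hvu hv
    simp
  set t := v / u
  have ht0 : 0 ≤ t := div_nonneg hv hu.le
  have ht1 : t ≤ 1 := (div_le_one hu).2 hvu
  have hconc := (concaveOn_rpow hq0 hq1).2 (Set.mem_Ici.2 hu.le)
    (Set.mem_Ici.2 (by linarith : 0 ≤ 2 * u)) (sub_nonneg.2 ht1) ht0 (by ring)
  have hpt : (1 - t) • u + t • (2 * u) = u + v := by
    simp only [smul_eq_mul, t]; field_simp; ring
  dsimp only at hconc
  rw [hpt, smul_eq_mul, smul_eq_mul, mul_rpow zero_le_two hu.le] at hconc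
  have hw : v * u ^ (q - 1) = t * u ^ q := by
    rw [rpow_sub_one hu.ne']; simp only [t]; ring
  rw [hw]
  linarith

theorem two_rpow_sub_one_mul_rpow_le_add_rpow_sub_rpow (hq0 : 0 ≤ q) (hq1 : q ≤ 1) {u v : ℝ}
    (hu : 0 ≤ u) (huv : u ≤ v) : (2 ^ q - 1) * v ^ q ≤ (u + v) ^ q - u ^ q := by
  have h := (concaveOn_rpow hq0 hq1).add_le_add_of_le_of_le (Set.mem_Ici.2 hu)
    (Set.mem_Ici.2 (by linarith : 0 ≤ 2 * v)) (le_add_of_nonneg_right (hu.trans huv))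
    (by linarith) (by ring : u + v + v = u + 2 * v)
  rw [mul_rpow zero_le_two (hu.trans huv)] at h
  linarith

theorem rpow_eq_mul_rpow_mul_rpow_one_sub (hq : q ≠ 0) {u v : ℝ} (hv : 0 ≤ v) (hvu : v ≤ u) :
    v ^ q = (v * u ^ (q - 1)) ^ q * (u ^ q) ^ (1 - q) := by
  rcases (hv.trans hvu).eq_or_lt with rfl | hu
  · obtain rfl : v = 0 := le_antisymm hvu hv
    simp [zero_rpow hq]
  rw [mul_rpow hv (rpow_nonneg hu.le _), ← rpow_mul hu.le, ← rpow_mul hu.le, mul_assoc,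
    ← rpow_add hu]
  simp only [show (q - 1) * q + q * (1 - q) = 0 by ring, rpow_zero, mul_one]

theorem rpow_mul_add_one_sub_mul_le (hq0 : 0 ≤ q) (hq1 : q ≤ 1) {t α β : ℝ} (ht0 : 0 ≤ t)
    (ht1 : t ≤ 1) (hα : 0 ≤ α) (hβ : β ≤ q * α) : t ^ q * α + (1 - t) * β ≤ α := by
  have h := rpow_one_add_le_one_add_mul_self (by linarith : -1 ≤ t - 1) hq0 hq1
  rw [add_sub_cancel] at h
  nlinarith [mul_le_mul_of_nonneg_right h hα, mul_le_mul_of_nonneg_left hβ (sub_nonneg.2 ht1)]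

theorem sqrt_two_le_two_rpow (hq : 1 / 2 ≤ q) : √2 ≤ (2 : ℝ) ^ q := by
  rw [sqrt_eq_rpow]
  exact rpow_le_rpow_of_exponent_le one_le_two hq

theorem quarter_le_two_rpow_sub_one (hq : 1 / 2 ≤ q) : 1 / 4 ≤ (2 : ℝ) ^ q - 1 := by
  have : 5 / 4 ≤ √2 := (le_sqrt (by norm_num) (by norm_num)).2 (by norm_num)
  linarith [sqrt_two_le_two_rpow hq]

-- `2 ^ (-1 / q) ≤ 2 ^ (q - 2) ≤ 2 ^ q - 1`, since `-1 / q ≤ q - 2` and `2 ^ q ≥ 4 / 3`.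
theorem half_le_two_rpow_sub_one_rpow (hq : 1 / 2 ≤ q) : 1 / 2 ≤ ((2 : ℝ) ^ q - 1) ^ q := by
  have hq0 : 0 < q := by linarith
  have h43 : 4 / 3 ≤ √2 := (le_sqrt (by norm_num) (by norm_num)).2 (by norm_num)
  have hexp : -1 / q ≤ q - 2 := by
    rw [div_le_iff₀ hq0]; nlinarith [sq_nonneg (q - 1)]
  have hbase : (2 : ℝ) ^ (-1 / q) ≤ 2 ^ q - 1 := calc
    (2 : ℝ) ^ (-1 / q) ≤ 2 ^ (q - 2) := rpow_le_rpow_of_exponent_le one_le_two hexp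
    _ = 2 ^ q / 4 := by rw [rpow_sub two_pos]; norm_num
    _ ≤ 2 ^ q - 1 := by linarith [sqrt_two_le_two_rpow hq]
  calc (1 : ℝ) / 2 = ((2 : ℝ) ^ (-1 / q)) ^ q := by
        rw [← rpow_mul zero_le_two, div_mul_cancel₀ _ hq0.ne', rpow_neg_one]; norm_num
    _ ≤ (2 ^ q - 1) ^ q := rpow_le_rpow (by positivity) hbase hq0.le

theorem div_rpow_mul_rpow_add_div_le_max (hq : 1 / 2 ≤ q) (hq1 : q ≤ 1) {x y G : ℝ}
    (hx : 0 ≤ x) (hy : 0 ≤ y) :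
    (x / (2 ^ q - 1)) ^ q * G ^ (1 - q) + y / (2 ^ q - 1) ≤
      max (2 ^ (2 * q + 3) * (x + y)) (2 * (x + y) ^ q * G ^ (1 - q)) := by
  have hq0 : 0 < q := by linarith
  set c : ℝ := 2 ^ q - 1
  have hc4 : 1 / 4 ≤ c := quarter_le_two_rpow_sub_one hq
  have hc0 : 0 < c := by linarith
  have hcq : c ^ q ≤ 1 := rpow_le_one hc0.le
    (by linarith [rpow_le_rpow_of_exponent_le one_le_two hq1, rpow_one (2 : ℝ)]) hq0.le
  have hcq0 : 0 < c ^ q := rpow_pos_of_pos hc0 q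
  set M := max (2 ^ (2 * q + 3) * (x + y)) (2 * (x + y) ^ q * G ^ (1 - q))
  have hM1 : 2 ^ (2 * q + 3) * (x + y) ≤ M := le_max_left _ _
  have hM2 : 2 * (x + y) ^ q * G ^ (1 - q) ≤ M := le_max_right _ _
  have hM0 : 0 ≤ M := le_trans (by positivity) hM1
  rcases (add_nonneg hx hy).eq_or_lt with hΛ | hΛ
  · obtain ⟨rfl, rfl⟩ : x = 0 ∧ y = 0 := ⟨by linarith, by linarith⟩
    simpa [zero_rpow hq0.ne'] using hM0
  set t := x / (x + y)
  have hxt : x = t * (x + y) := (div_mul_cancel₀ _ hΛ.ne').symm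
  have hyt : y = (1 - t) * (x + y) := by rw [sub_mul, ← hxt]; ring
  have ht0 : 0 ≤ t := div_nonneg hx hΛ.le
  have ht1 : t ≤ 1 := (div_le_one hΛ).2 (by linarith)
  have h16 : 16 ≤ (2 : ℝ) ^ (2 * q + 3) := calc
    (16 : ℝ) = 2 ^ (4 : ℝ) := by norm_num
    _ ≤ 2 ^ (2 * q + 3) := rpow_le_rpow_of_exponent_le one_le_two (by linarith)
  have hα : (x + y) ^ q * G ^ (1 - q) / c ^ q ≤ M / (2 * c ^ q) := by
    rw [div_le_div_iff₀ hcq0 (by positivity)]; nlinarith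
  have hβ : (x + y) / c ≤ M / (2 ^ (2 * q + 3) * c) := by
    rw [div_le_div_iff₀ hc0 (by positivity)]; nlinarith
  have hβα : M / (2 ^ (2 * q + 3) * c) ≤ q * (M / (2 * c ^ q)) := calc
    M / (2 ^ (2 * q + 3) * c) ≤ M / 4 :=
      div_le_div_of_nonneg_left hM0 (by norm_num) (by nlinarith)
    _ ≤ q * (M / 2) := by nlinarith
    _ ≤ q * (M / (2 * c ^ q)) := by gcongr; nlinarith
  have hxq : (x / c) ^ q = t ^ q * ((x + y) ^ q / c ^ q) := by
    rw [← div_rpow hΛ.le hc0.le, ← mul_rpow ht0 (by positivity), ← mul_div_assoc, ← hxt]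
  have hyc : y / c = (1 - t) * ((x + y) / c) := by
    nth_rewrite 1 [hyt]; ring
  calc (x / c) ^ q * G ^ (1 - q) + y / c
      = t ^ q * ((x + y) ^ q * G ^ (1 - q) / c ^ q) + (1 - t) * ((x + y) / c) := by
        rw [hxq, hyc]; ring
    _ ≤ t ^ q * (M / (2 * c ^ q)) + (1 - t) * (M / (2 ^ (2 * q + 3) * c)) := by
        gcongr
    _ ≤ M / (2 * c ^ q) := rpow_mul_add_one_sub_mul_le hq0.le hq1 ht0 ht1 (by positivity) hβα
    _ ≤ M := div_le_self hM0 (by nlinarith [half_le_two_rpow_sub_one_rpow hq])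

end Real

section

variable {α : Type*} [MeasurableSpace α] {μ : Measure α}

theorem MeasureTheory.Integrable.memLp_rpow {f : α → ℝ} (hf0 : 0 ≤ᵐ[μ] f)
    (hf : Integrable f μ) {θ : ℝ} (hθ : 0 < θ) :
    MemLp (fun a => f a ^ θ) (ENNReal.ofReal (1 / θ)) μ := by
  have h := (memLp_one_iff_integrable.2 hf).norm_rpow_div (ENNReal.ofReal θ)
  rw [ENNReal.toReal_ofReal hθ.le, ← ENNReal.ofReal_one, ← ENNReal.ofReal_div_of_pos hθ] at h
  refine h.ae_eq ?_
  filter_upwards [hf0] with a ha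
  rw [Real.norm_of_nonneg ha]

theorem integral_rpow_mul_rpow_le {f g : α → ℝ} {θ : ℝ} (hθ0 : 0 < θ) (hθ1 : θ < 1)
    (hf0 : 0 ≤ᵐ[μ] f) (hg0 : 0 ≤ᵐ[μ] g) (hf : Integrable f μ) (hg : Integrable g μ) :
    ∫ a, f a ^ θ * g a ^ (1 - θ) ∂μ ≤ (∫ a, f a ∂μ) ^ θ * (∫ a, g a ∂μ) ^ (1 - θ) := by
  have hθ1' : 0 < 1 - θ := sub_pos.2 hθ1
  have key := integral_mul_le_Lp_mul_Lq_of_nonneg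
    (Real.holderConjugate_one_div hθ0 hθ1' (add_sub_cancel θ 1))
    (hf0.mono fun a ha => Real.rpow_nonneg ha θ) (hg0.mono fun a ha => Real.rpow_nonneg ha _)
    (hf.memLp_rpow hf0 hθ0) (hg.memLp_rpow hg0 hθ1')
  have hcancel {h : α → ℝ} {s : ℝ} (hs : 0 < s) (h0 : 0 ≤ᵐ[μ] h) :
      ∫ a, (h a ^ s) ^ (1 / s) ∂μ = ∫ a, h a ∂μ := by
    refine integral_congr_ae ?_
    filter_upwards [h0] with a ha
    rw [← Real.rpow_mul ha, mul_one_div_cancel hs.ne', Real.rpow_one]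
  rwa [hcancel hθ0 hf0, hcancel hθ1' hg0, one_div_one_div, one_div_one_div] at key

variable {u v : α → ℝ} {q : ℝ} {s : Set α}

theorem setIntegral_rpow_le_div_two_rpow_sub_one (hq0 : 0 < q) (hq1 : q ≤ 1) (hu : 0 ≤ u)
    (hs : MeasurableSet s) (huv : ∀ a ∈ s, u a ≤ v a)
    (hφ : Integrable (fun a => (u a + v a) ^ q - u a ^ q) μ)
    (hv : Integrable (fun a => v a ^ q) μ) :
    ∫ a in s, v a ^ q ∂μ ≤ (∫ a in s, ((u a + v a) ^ q - u a ^ q) ∂μ) / (2 ^ q - 1) := by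
  have hc : 0 < (2 : ℝ) ^ q - 1 := sub_pos.2 (Real.one_lt_rpow one_lt_two hq0)
  rw [le_div_iff₀ hc, mul_comm, ← integral_const_mul]
  exact setIntegral_mono_on (hv.const_mul _).integrableOn hφ.integrableOn hs fun a ha =>
    Real.two_rpow_sub_one_mul_rpow_le_add_rpow_sub_rpow hq0.le hq1 (hu a) (huv a ha)

theorem setIntegral_rpow_le_div_rpow_mul_rpow (hq0 : 0 < q) (hq1 : q < 1) (hu : 0 ≤ u)
    (hv : 0 ≤ v) (hum : Measurable u) (hvm : Measurable v) (hs : MeasurableSet s)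
    (hvu : ∀ a ∈ s, v a ≤ u a)
    (hφ : Integrable (fun a => (u a + v a) ^ q - u a ^ q) μ)
    (huq : Integrable (fun a => u a ^ q) μ) :
    ∫ a in s, v a ^ q ∂μ ≤
      ((∫ a in s, ((u a + v a) ^ q - u a ^ q) ∂μ) / (2 ^ q - 1)) ^ q *
        (∫ a in s, u a ^ q ∂μ) ^ (1 - q) := by
  have hc : 0 < (2 : ℝ) ^ q - 1 := sub_pos.2 (Real.one_lt_rpow one_lt_two hq0)
  set w : α → ℝ := fun a => v a * u a ^ (q - 1)
  have hw0 : 0 ≤ w := fun a => mul_nonneg (hv a) (Real.rpow_nonneg (hu a) _)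
  have hwφ : ∀ a ∈ s, w a ≤ ((u a + v a) ^ q - u a ^ q) / (2 ^ q - 1) := fun a ha => by
    rw [le_div_iff₀ hc, mul_comm]
    exact Real.two_rpow_sub_one_mul_le_add_rpow_sub_rpow hq0.le hq1.le (hv a) (hvu a ha)
  have hw : IntegrableOn w s μ := by
    refine (hφ.integrableOn.div_const ((2 : ℝ) ^ q - 1)).mono'
      (hvm.mul (hum.pow_const _)).aestronglyMeasurable ((ae_restrict_iff' hs).2 ?_)
    exact Filter.Eventually.of_forall fun a ha => by
      rw [Real.norm_of_nonneg (hw0 a)]; exact hwφ a ha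
  calc ∫ a in s, v a ^ q ∂μ = ∫ a in s, w a ^ q * (u a ^ q) ^ (1 - q) ∂μ :=
        setIntegral_congr_fun hs fun a ha =>
          Real.rpow_eq_mul_rpow_mul_rpow_one_sub hq0.ne' (hv a) (hvu a ha)
    _ ≤ (∫ a in s, w a ∂μ) ^ q * (∫ a in s, u a ^ q ∂μ) ^ (1 - q) :=
        integral_rpow_mul_rpow_le hq0 hq1 (Filter.Eventually.of_forall hw0)
          (Filter.Eventually.of_forall fun a => Real.rpow_nonneg (hu a) q) hw huq.integrableOn
    _ ≤ _ := by
        refine mul_le_mul_of_nonneg_right (Real.rpow_le_rpow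
          (setIntegral_nonneg hs fun a _ => hw0 a) ?_ hq0.le) (Real.rpow_nonneg
          (setIntegral_nonneg hs fun a _ => Real.rpow_nonneg (hu a) q) _)
        rw [← integral_div]
        exact setIntegral_mono_on hw (hφ.integrableOn.div_const _) hs hwφ

theorem integral_rpow_le_max (hq : 1 / 2 ≤ q) (hq1 : q < 1) (hu : 0 ≤ u) (hv : 0 ≤ v)
    (hum : Measurable u) (hvm : Measurable v) (hint : Integrable (fun a => (u a + v a) ^ q) μ) :
    ∫ a, v a ^ q ∂μ ≤
      max (2 ^ (2 * q + 3) * (∫ a, (u a + v a) ^ q ∂μ - ∫ a, u a ^ q ∂μ))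
        (2 * (∫ a, (u a + v a) ^ q ∂μ - ∫ a, u a ^ q ∂μ) ^ q * (∫ a, u a ^ q ∂μ) ^ (1 - q)) := by
  have hq0 : 0 < q := by linarith
  have hle_add {f : α → ℝ} (hf : Measurable f) (hf0 : 0 ≤ f) (hfle : ∀ a, f a ≤ u a + v a) :
      Integrable (fun a => f a ^ q) μ :=
    hint.mono' (hf.pow_const q).aestronglyMeasurable (Filter.Eventually.of_forall fun a => by
      rw [Real.norm_of_nonneg (Real.rpow_nonneg (hf0 a) q)]
      exact Real.rpow_le_rpow (hf0 a) (hfle a) hq0.le)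
  have huq := hle_add hum hu fun a => le_add_of_nonneg_right (hv a)
  have hvq := hle_add hvm hv fun a => le_add_of_nonneg_left (hu a)
  have hφ : Integrable (fun a => (u a + v a) ^ q - u a ^ q) μ := hint.sub huq
  have hφ0 : ∀ a, 0 ≤ (u a + v a) ^ q - u a ^ q := fun a =>
    sub_nonneg.2 (Real.rpow_le_rpow (hu a) (le_add_of_nonneg_right (hv a)) hq0.le)
  set s := {a | v a ≤ u a}
  have hs : MeasurableSet s := measurableSet_le hvm hum
  have hsplit : ∫ a in s, ((u a + v a) ^ q - u a ^ q) ∂μ +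
      ∫ a in sᶜ, ((u a + v a) ^ q - u a ^ q) ∂μ = ∫ a, (u a + v a) ^ q ∂μ - ∫ a, u a ^ q ∂μ := by
    rw [integral_add_compl hs hφ, integral_sub hint huq]
  have hus : (∫ a in s, u a ^ q ∂μ) ^ (1 - q) ≤ (∫ a, u a ^ q ∂μ) ^ (1 - q) :=
    Real.rpow_le_rpow (setIntegral_nonneg hs fun a _ => Real.rpow_nonneg (hu a) q)
      (setIntegral_le_integral huq (Filter.Eventually.of_forall fun a => Real.rpow_nonneg (hu a) q))
      (by linarith)
  have hsmall := setIntegral_rpow_le_div_rpow_mul_rpow hq0 hq1 hu hv hum hvm hs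
    (fun a ha => ha) hφ huq
  have hlarge := setIntegral_rpow_le_div_two_rpow_sub_one hq0 hq1.le hu hs.compl
    (fun a (ha : ¬v a ≤ u a) => (not_le.1 ha).le) hφ hvq
  rw [← integral_add_compl hs hvq, ← hsplit]
  refine le_trans (add_le_add (hsmall.trans ?_) hlarge) (Real.div_rpow_mul_rpow_add_div_le_max hq
    hq1.le (setIntegral_nonneg hs fun a _ => hφ0 a) (setIntegral_nonneg hs.compl fun a _ => hφ0 a))
  gcongr
  exact Real.rpow_nonneg (div_nonneg (setIntegral_nonneg hs fun a _ => hφ0 a)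
    (sub_nonneg.2 (Real.one_le_rpow one_le_two hq0.le))) q

end

theorem stmt11_general (p : ℝ) (hp1 : 1 < p) (hp2 : p < 2) (ω : Measure ℝ)
    (g b : ℝ → ℝ) (hg : ∀ x, 0 ≤ g x) (hb : ∀ x, 0 ≤ b x)
    (hgm : Measurable g) (hbm : Measurable b)
    (hint1 : Integrable (fun x => ((g x) ^ 2 + (b x) ^ 2) ^ (p / 2)) ω) :
    ∫ x, (b x) ^ p ∂ω ≤
      max (((1 : ℝ) / 2) ^ (-p - 3) *
            ((∫ x, ((g x) ^ 2 + (b x) ^ 2) ^ (p / 2) ∂ω) - ∫ x, (g x) ^ p ∂ω))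
          ((1 - (1 : ℝ) / 2)⁻¹ *
            ((∫ x, ((g x) ^ 2 + (b x) ^ 2) ^ (p / 2) ∂ω) - ∫ x, (g x) ^ p ∂ω) ^ (p / 2) *
            (∫ x, (g x) ^ p ∂ω) ^ (1 - p / 2)) := by
  have hsq {y : ℝ} (hy : 0 ≤ y) : (y ^ 2) ^ (p / 2) = y ^ p := by
    rw [← Real.rpow_natCast, ← Real.rpow_mul hy]; ring_nf
  have key := integral_rpow_le_max (μ := ω) (u := fun x => g x ^ 2) (v := fun x => b x ^ 2)
    (q := p / 2) (by linarith) (by linarith) (fun x => sq_nonneg _) (fun x => sq_nonneg _)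
    (hgm.pow_const 2) (hbm.pow_const 2) hint1
  simp only [hsq (hg _), hsq (hb _)] at key
  rwa [show ((1 : ℝ) / 2) ^ (-p - 3) = 2 ^ (2 * (p / 2) + 3) by
      rw [one_div, Real.inv_rpow zero_le_two, ← Real.rpow_neg zero_le_two]; ring_nf,
    show (1 - (1 : ℝ) / 2)⁻¹ = 2 by norm_num]

/-- Scalar core of the bad-part control lemma: for `1 < p < 2`, nonnegative
measurable `g, b` and `Λ^p = ∫(g²+b²)^{p/2} dω − ∫ g^p dω`, with `η = 1/2` one has
`∫ b^p dω ≤ max{η^{−p−3} Λ^p, (1−η)⁻¹ (Λ^p)^{p/2} (∫ g^p dω)^{1−p/2}}`. -/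
theorem stmt11 (p : ℝ) (hp1 : 1 < p) (hp2 : p < 2) (ω : Measure ℝ)
    (g b : ℝ → ℝ) (hg : ∀ x, 0 ≤ g x) (hb : ∀ x, 0 ≤ b x)
    (hgm : Measurable g) (hbm : Measurable b)
    (hint1 : Integrable (fun x => ((g x) ^ 2 + (b x) ^ 2) ^ (p / 2)) ω)
    (hint2 : Integrable (fun x => (g x) ^ p) ω)
    (hint3 : Integrable (fun x => (b x) ^ p) ω) :
    ∫ x, (b x) ^ p ∂ω ≤
      max (((1 : ℝ) / 2) ^ (-p - 3) *
            ((∫ x, ((g x) ^ 2 + (b x) ^ 2) ^ (p / 2) ∂ω) - ∫ x, (g x) ^ p ∂ω))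
          ((1 - (1 : ℝ) / 2)⁻¹ *
            ((∫ x, ((g x) ^ 2 + (b x) ^ 2) ^ (p / 2) ∂ω) - ∫ x, (g x) ^ p ∂ω) ^ (p / 2) *
            (∫ x, (g x) ^ p ∂ω) ^ (1 - p / 2)) :=
  stmt11_general p hp1 hp2 ω g b hg hb hgm hbm hint1
end

section
/- Let σ be a locally finite positive Borel measure on ℝ, let I be an interval, and let {I_r}_{r≥1} be pairwise disjoint subintervals of I. Then for x, y ∈ I_r with y < x, one has (P(I_r, 1_{I∖I_r}σ)/ℓ(I_r))·(x−y) ≤ 2·[H(1_{I∖I_r}σ)(x) − H(1_{I∖I_r}σ)(y)], where P(J,ν) = ∫ ℓ(J)/(ℓ(J)+|t−c_J|)² dν(t) is the Poisson integral and H ν(x) = ∫ 1/(t−x) dν(t) is the Hilbert transform of the measure 1_{I∖I_r}σ (no principal value needed since the support avoids I_r). -/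
open MeasureTheory Set

/-- The Poisson integral `P(J,ν) = ∫ ℓ/(ℓ+|t−c|)² dν(t)` of a measure `ν`, for an
interval with center `c` and length `ℓ`. -/
noncomputable def poissonIntegral (c ℓ : ℝ) (ν : Measure ℝ) : ℝ :=
  ∫ t, ℓ / (ℓ + |t - c|) ^ 2 ∂ν

/-- Energy reversal for the Hilbert transform: if `{I_r}` are pairwise disjoint
subintervals of `I` and `y < x` both lie in `I_r`, then
`(P(I_r, 1_{I∖I_r}σ)/ℓ(I_r))·(x−y) ≤ 2[H(1_{I∖I_r}σ)(x) − H(1_{I∖I_r}σ)(y)]`,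
where `Hν(x) = ∫ (t−x)⁻¹ dν(t)`. -/
theorem stmt13 (σ : Measure ℝ) [IsLocallyFiniteMeasure σ] (A B : ℝ)
    (a b : ℕ → ℝ) (hab : ∀ r, a r < b r)
    (hsub : ∀ r, Set.Ioo (a r) (b r) ⊆ Set.Ioo A B)
    (hdisj : ∀ r s, r ≠ s → Disjoint (Set.Ioo (a r) (b r)) (Set.Ioo (a s) (b s)))
    (r : ℕ) (x y : ℝ) (hx : x ∈ Set.Ioo (a r) (b r)) (hy : y ∈ Set.Ioo (a r) (b r))
    (hyx : y < x) :
    (poissonIntegral ((a r + b r) / 2) (b r - a r)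
        (σ.restrict (Set.Ioo A B \ Set.Ioo (a r) (b r))) / (b r - a r)) * (x - y)
      ≤ 2 * ((∫ t in Set.Ioo A B \ Set.Ioo (a r) (b r), (t - x)⁻¹ ∂σ)
           - ∫ t in Set.Ioo A B \ Set.Ioo (a r) (b r), (t - y)⁻¹ ∂σ) := by
  set c : ℝ := (a r + b r) / 2 with hc
  set L : ℝ := b r - a r with hLdef
  set S : Set ℝ := Set.Ioo A B \ Set.Ioo (a r) (b r) with hSdef
  obtain ⟨hax, hxb⟩ := hx
  obtain ⟨hay, hyb⟩ := hy
  have hL : 0 < L := sub_pos.2 (hab r)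
  have hSm : MeasurableSet S := measurableSet_Ioo.diff measurableSet_Ioo
  have hfin : σ S ≠ ⊤ := by
    refine ne_of_lt (lt_of_le_of_lt
      (measure_mono (show S ⊆ Set.Icc A B from (diff_subset).trans Ioo_subset_Icc_self))
      isCompact_Icc.measure_lt_top)
  -- location of points of S
  have hloc : ∀ t ∈ S, t ≤ a r ∨ b r ≤ t := by
    intro t ht
    by_contra h
    push_neg at h
    exact ht.2 ⟨h.1, h.2⟩
  -- integrability of the Hilbert kernels
  have intAt : ∀ z : ℝ, a r < z → z < b r →
      IntegrableOn (fun t => (t - z)⁻¹) S σ := by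
    intro z haz hzb
    apply Measure.integrableOn_of_bounded (M := (min (z - a r) (b r - z))⁻¹) hfin
    · exact ((measurable_id.sub_const z).inv).aestronglyMeasurable
    · refine (ae_restrict_iff' hSm).2 (ae_of_all _ fun t ht => ?_)
      have hm : 0 < min (z - a r) (b r - z) := lt_min (by linarith) (by linarith)
      have : min (z - a r) (b r - z) ≤ |t - z| := by
        rcases hloc t ht with h | h
        · rw [abs_of_nonpos (by linarith)]
          exact (min_le_left _ _).trans (by linarith)
        · rw [abs_of_nonneg (by linarith)]
          exact (min_le_right _ _).trans (by linarith)
      rw [Real.norm_eq_abs, abs_inv]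
      exact inv_anti₀ hm this
  have intx := intAt x hax hxb
  have inty := intAt y hay hyb
  -- integrability of the Poisson kernel
  have intP : IntegrableOn (fun t => L / (L + |t - c|) ^ 2) S σ := by
    apply Measure.integrableOn_of_bounded (M := L⁻¹) hfin
    · exact (Continuous.div continuous_const (by continuity)
        (fun t => by positivity)).aestronglyMeasurable
    · refine ae_of_all _ fun t => ?_
      have h1 : L ≤ L + |t - c| := by linarith [abs_nonneg (t - c)]
      have h2 : L ^ 2 ≤ (L + |t - c|) ^ 2 := by nlinarith [abs_nonneg (t - c)]
      rw [Real.norm_eq_abs, abs_of_nonneg (by positivity)]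
      rw [div_le_iff₀ (by positivity), inv_mul_eq_div, le_div_iff₀ hL]
      nlinarith
  -- pointwise inequality
  have key : ∀ t ∈ S, L / (L + |t - c|) ^ 2 / L * (x - y)
      ≤ 2 * ((t - x)⁻¹ - (t - y)⁻¹) := by
    intro t ht
    have hcx : |c - x| ≤ L := by
      rw [abs_le]; constructor <;> [skip; skip] <;>
        · simp only [hc, hLdef]; linarith
    have hcy : |c - y| ≤ L := by
      rw [abs_le]; constructor <;> [skip; skip] <;>
        · simp only [hc, hLdef]; linarith
    have htx : |t - x| ≤ L + |t - c| := by
      calc |t - x| = |(t - c) + (c - x)| := by ring_nf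
        _ ≤ |t - c| + |c - x| := abs_add_le _ _
        _ ≤ L + |t - c| := by linarith
    have hty : |t - y| ≤ L + |t - c| := by
      calc |t - y| = |(t - c) + (c - y)| := by ring_nf
        _ ≤ |t - c| + |c - y| := abs_add_le _ _
        _ ≤ L + |t - c| := by linarith
    have hP : 0 < (t - x) * (t - y) := by
      rcases hloc t ht with h | h
      · exact mul_pos_of_neg_of_neg (by linarith) (by linarith)
      · exact mul_pos (by linarith) (by linarith)
    have hPle : (t - x) * (t - y) ≤ (L + |t - c|) ^ 2 := by
      calc (t - x) * (t - y) ≤ |(t - x) * (t - y)| := le_abs_self _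
        _ = |t - x| * |t - y| := abs_mul _ _
        _ ≤ (L + |t - c|) ^ 2 := by nlinarith [abs_nonneg (t - x), abs_nonneg (t - y)]
    have hxne : t - x ≠ 0 := fun h => by nlinarith
    have hyne : t - y ≠ 0 := fun h => by nlinarith
    have hid : (t - x)⁻¹ - (t - y)⁻¹ = (x - y) / ((t - x) * (t - y)) := by
      field_simp
      try ring
    have h1 : L / (L + |t - c|) ^ 2 / L * (x - y) = (x - y) / (L + |t - c|) ^ 2 := by
      have : L + |t - c| ≠ 0 := by positivity
      field_simp
    rw [hid, h1]
    have h2 : (x - y) / (L + |t - c|) ^ 2 ≤ (x - y) / ((t - x) * (t - y)) := by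
      gcongr
    have h3 : 0 ≤ (x - y) / ((t - x) * (t - y)) :=
      div_nonneg (by linarith) hP.le
    linarith
  -- combine
  have eqL : poissonIntegral c L (σ.restrict S) / L * (x - y)
      = ∫ t in S, L / (L + |t - c|) ^ 2 / L * (x - y) ∂σ := by
    rw [poissonIntegral, integral_mul_const, integral_div]
  have eqR : 2 * ((∫ t in S, (t - x)⁻¹ ∂σ) - ∫ t in S, (t - y)⁻¹ ∂σ)
      = ∫ t in S, 2 * ((t - x)⁻¹ - (t - y)⁻¹) ∂σ := by
    rw [← integral_sub intx inty, ← integral_const_mul]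
  rw [eqL, eqR]
  exact setIntegral_mono_on ((intP.div_const L).mul_const (x - y))
    ((intx.sub inty).const_mul 2) hSm key
end

section
/- Let J ⊆ I ⊆ K be intervals with ℓ(J) ≤ ℓ(I), and suppose dist(J, ∂I) > 2 ℓ(J)^ε ℓ(I)^{1−ε} for some 0 < ε < 1/2. Then for every locally finite positive Borel measure μ, the Poisson integrals satisfy P(J, μ 1_{K∖I}) ≤ C_ε (ℓ(J)/ℓ(I))^{1−2ε} P(I, μ 1_{K∖I}), where P(Q,ν) = ∫ ℓ(Q)/(ℓ(Q)+|y−c_Q|)² dν(y). -/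
/-!
Outside `I` the point `y` is at distance at least `r := 2 ℓ(J)^ε ℓ(I)^{1-ε} = 2 x^ε ℓ(I)`
from `c_J`, where `x = ℓ(J)/ℓ(I) ≤ 1`, and `|y - c_I| ≤ |y - c_J| + ℓ(I)/2`. Hence
`x^ε (ℓ(I) + |y - c_I|) ≤ 2 (ℓ(J) + |y - c_J|)`, and squaring turns the Poisson kernel of `J`
into `4 x / x^{2ε} = 4 x^{1-2ε}` times that of `I`. Integrating against `μ 1_{K∖I}` (a finite
measure, so both kernels are integrable) gives the lemma with `C = 4`.
-/

open MeasureTheory Set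

lemma integrable_poissonKernel {ℓ : ℝ} (hℓ : 0 < ℓ) (c : ℝ) (ν : Measure ℝ)
    [IsFiniteMeasure ν] : Integrable (fun t => ℓ / (ℓ + |t - c|) ^ 2) ν := by
  have hcont : Continuous (fun t : ℝ => ℓ / (ℓ + |t - c|) ^ 2) :=
    continuous_const.div (by fun_prop) fun t => by positivity
  refine (integrable_const (1 / ℓ)).mono' hcont.aestronglyMeasurable (ae_of_all _ fun t => ?_)
  have hpos : 0 < ℓ + |t - c| := by positivity
  rw [Real.norm_eq_abs, abs_of_nonneg (by positivity), div_le_div_iff₀ (by positivity) hℓ]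
  nlinarith [abs_nonneg (t - c)]

lemma poissonIntegral_le_of_ae_le {c c' ℓ ℓ' C : ℝ} (hℓ : 0 < ℓ) (hℓ' : 0 < ℓ')
    (ν : Measure ℝ) [IsFiniteMeasure ν]
    (h : ∀ᵐ t ∂ν, ℓ / (ℓ + |t - c|) ^ 2 ≤ C * (ℓ' / (ℓ' + |t - c'|) ^ 2)) :
    poissonIntegral c ℓ ν ≤ C * poissonIntegral c' ℓ' ν := by
  rw [poissonIntegral, poissonIntegral, ← integral_const_mul]
  exact integral_mono_ae (integrable_poissonKernel hℓ c ν)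
    ((integrable_poissonKernel hℓ' c' ν).const_mul C) h

lemma min_sub_le_abs_sub_midpoint {aI bI aJ bJ t : ℝ} (hJ : aJ ≤ bJ) (ht : t ∉ Ioo aI bI) :
    min (aJ - aI) (bI - bJ) ≤ |t - (aJ + bJ) / 2| := by
  rcases le_or_gt t aI with h | h
  · exact (min_le_left _ _).trans ((by linarith : aJ - aI ≤ -(t - (aJ + bJ) / 2)).trans
      (neg_le_abs _))
  · have : bI ≤ t := not_lt.1 fun h' => ht ⟨h, h'⟩
    exact (min_le_right _ _).trans ((by linarith : bI - bJ ≤ t - (aJ + bJ) / 2).trans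
      (le_abs_self _))

lemma abs_sub_midpoint_le {a b c : ℝ} (hc : c ∈ Icc a b) (t : ℝ) :
    |t - (a + b) / 2| ≤ |t - c| + (b - a) / 2 := by
  have : |c - (a + b) / 2| ≤ (b - a) / 2 := abs_le.2 ⟨by linarith [hc.1], by linarith [hc.2]⟩
  linarith [abs_sub_le t c ((a + b) / 2)]

lemma rpow_mul_rpow_one_sub {a b : ℝ} (ha : 0 ≤ a) (hb : 0 < b) (ε : ℝ) :
    a ^ ε * b ^ (1 - ε) = (a / b) ^ ε * b := by
  rw [Real.div_rpow ha hb.le, Real.rpow_sub hb, Real.rpow_one]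
  field_simp

lemma poissonKernel_le_of_far {ε ℓJ ℓI r s : ℝ} (hε : 0 ≤ ε) (hJ : 0 < ℓJ) (hJI : ℓJ ≤ ℓI)
    (hr : 2 * ℓJ ^ ε * ℓI ^ (1 - ε) ≤ r) (hs0 : 0 ≤ s) (hs : s ≤ r + ℓI / 2) :
    ℓJ / (ℓJ + r) ^ 2 ≤ 4 * (ℓJ / ℓI) ^ (1 - 2 * ε) * (ℓI / (ℓI + s) ^ 2) := by
  have hI : 0 < ℓI := hJ.trans_le hJI
  set x := ℓJ / ℓI with hx
  have hx0 : 0 < x := div_pos hJ hI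
  have hℓJ : ℓJ = x * ℓI := by rw [hx, div_mul_cancel₀ _ hI.ne']
  have hxε0 : 0 < x ^ ε := Real.rpow_pos_of_pos hx0 ε
  have hxε1 : x ^ ε ≤ 1 := Real.rpow_le_one hx0.le ((div_le_one hI).2 hJI) hε
  have hr' : 2 * (x ^ ε * ℓI) ≤ r := by
    rwa [mul_assoc, rpow_mul_rpow_one_sub hJ.le hI] at hr
  have hsε : x ^ ε * s ≤ x ^ ε * (r + ℓI / 2) := mul_le_mul_of_nonneg_left hs hxε0.le
  have hrε : x ^ ε * r ≤ r := mul_le_of_le_one_left (by linarith [mul_pos hxε0 hI]) hxε1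
  have hcompare : x ^ ε * (ℓI + s) / 2 ≤ ℓJ + r := by nlinarith
  calc ℓJ / (ℓJ + r) ^ 2
      ≤ ℓJ / (x ^ ε * (ℓI + s) / 2) ^ 2 :=
        div_le_div_of_nonneg_left hJ.le (by positivity)
          (pow_le_pow_left₀ (by positivity) hcompare 2)
    _ = 4 * (x / (x ^ ε) ^ 2) * (ℓI / (ℓI + s) ^ 2) := by
        rw [hℓJ]; field_simp; norm_num
    _ = 4 * x ^ (1 - 2 * ε) * (ℓI / (ℓI + s) ^ 2) := by
        rw [Real.rpow_sub hx0, Real.rpow_one, mul_comm 2 ε,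
          ← Real.rpow_mul_natCast hx0.le]
        norm_num

theorem stmt15_general (ε : ℝ) (hε0 : 0 < ε) :
    ∃ C : ℝ, 0 < C ∧
      ∀ (μ : Measure ℝ), IsLocallyFiniteMeasure μ →
        ∀ aJ bJ aI bI aK bK : ℝ,
          aJ < bJ → aI ≤ aJ → bJ ≤ bI → aK ≤ aI → bI ≤ bK →
          bJ - aJ ≤ bI - aI →
          2 * (bJ - aJ) ^ ε * (bI - aI) ^ (1 - ε) < min (aJ - aI) (bI - bJ) →
          poissonIntegral ((aJ + bJ) / 2) (bJ - aJ)
              (μ.restrict (Set.Ioo aK bK \ Set.Ioo aI bI))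
            ≤ C * ((bJ - aJ) / (bI - aI)) ^ (1 - 2 * ε) *
                poissonIntegral ((aI + bI) / 2) (bI - aI)
                  (μ.restrict (Set.Ioo aK bK \ Set.Ioo aI bI)) := by
  refine ⟨4, by norm_num, fun μ _ aJ bJ aI bI aK bK hJ haI hbI _ _ hJI hdist => ?_⟩
  have : IsFiniteMeasure (μ.restrict (Ioo aK bK \ Ioo aI bI)) :=
    isFiniteMeasure_restrict.2 ((Metric.isBounded_Ioo aK bK).subset sdiff_subset).measure_lt_top.ne
  refine poissonIntegral_le_of_ae_le (by linarith) (by linarith) _ ?_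
  filter_upwards [ae_restrict_mem (measurableSet_Ioo.diff measurableSet_Ioo)] with t ht
  have hcJ : (aJ + bJ) / 2 ∈ Icc aI bI := ⟨by linarith, by linarith⟩
  exact poissonKernel_le_of_far hε0.le (by linarith) hJI
    (hdist.le.trans (min_sub_le_abs_sub_midpoint hJ.le ht.2)) (abs_nonneg _)
    (abs_sub_midpoint_le hcJ t)

/-- Poisson Decay Lemma (Nazarov–Treil–Volberg): if `J ⊆ I ⊆ K` are intervals with
`ℓ(J) ≤ ℓ(I)` and `dist(J,∂I) > 2 ℓ(J)^ε ℓ(I)^{1−ε}` for some `0 < ε < 1/2`, then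
`P(J, μ 1_{K∖I}) ≤ C_ε (ℓ(J)/ℓ(I))^{1−2ε} P(I, μ 1_{K∖I})` for every locally finite
positive Borel measure `μ`. -/
theorem stmt15 (ε : ℝ) (hε0 : 0 < ε) (hε : ε < 1 / 2) :
    ∃ C : ℝ, 0 < C ∧
      ∀ (μ : Measure ℝ), IsLocallyFiniteMeasure μ →
        ∀ aJ bJ aI bI aK bK : ℝ,
          aJ < bJ → aI ≤ aJ → bJ ≤ bI → aK ≤ aI → bI ≤ bK →
          bJ - aJ ≤ bI - aI →
          2 * (bJ - aJ) ^ ε * (bI - aI) ^ (1 - ε) < min (aJ - aI) (bI - bJ) →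
          poissonIntegral ((aJ + bJ) / 2) (bJ - aJ)
              (μ.restrict (Set.Ioo aK bK \ Set.Ioo aI bI))
            ≤ C * ((bJ - aJ) / (bI - aI)) ^ (1 - 2 * ε) *
                poissonIntegral ((aI + bI) / 2) (bI - aI)
                  (μ.restrict (Set.Ioo aK bK \ Set.Ioo aI bI)) :=
  stmt15_general ε hε0
end
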